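/- Under the MDP regularity assumptions and the nearest neighbor kernel assumptions, the composed operator H = Γ_NN ∘ F, acting on bounded measurable functions Q : X × A → ℝ by (HQ)(x,a) = Σ_{i=1}^n K(x,i)[ r(c_i,a) + γ ∫_X p(y|c_i,a) max_{b∈A} Q(y,b) λ(dy) ], is a γ-contraction with respect to the supremum norm: ‖HQ₁ − HQ₂‖_∞ ≤ γ‖Q₁ − Q₂‖_∞ for all bounded measurable Q₁, Q₂. -/

import Mathlib

/-!
The rewards cancel in the difference, leaving `γ` times a convex combination (weights `K x i`)
of differences of integrals against the probability densities `p (· | c i, a)`. Since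
`|max_b Q₁ y b - max_b Q₂ y b| ≤ max_b |Q₁ y b - Q₂ y b| ≤ C`, each such difference is at most `C`.
-/

open MeasureTheory

theorem abs_ciSup_sub_ciSup_le {ι : Type*} [Finite ι] [Nonempty ι] {f g : ι → ℝ} {C : ℝ}
    (h : ∀ i, |f i - g i| ≤ C) : |(⨆ i, f i) - ⨆ i, g i| ≤ C := by
  have hf := (Set.finite_range f).bddAbove
  have hg := (Set.finite_range g).bddAbove
  rw [abs_sub_le_iff, sub_le_iff_le_add, sub_le_iff_le_add]
  constructor
  · exact ciSup_le fun i => by linarith [le_abs_self (f i - g i), h i, le_ciSup hg i]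
  · exact ciSup_le fun i => by linarith [neg_abs_le (f i - g i), h i, le_ciSup hf i]

theorem Finset.abs_sum_mul_sub_sum_mul_le {ι : Type*} (s : Finset ι) {w u v : ι → ℝ} {C : ℝ}
    (hw : ∀ i ∈ s, 0 ≤ w i) (hw_one : ∑ i ∈ s, w i = 1) (huv : ∀ i ∈ s, |u i - v i| ≤ C) :
    |∑ i ∈ s, w i * u i - ∑ i ∈ s, w i * v i| ≤ C := by
  rw [← Finset.sum_sub_distrib]
  calc |∑ i ∈ s, (w i * u i - w i * v i)| ≤ ∑ i ∈ s, w i * C := by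
        refine (Finset.abs_sum_le_sum_abs _ _).trans (Finset.sum_le_sum fun i hi => ?_)
        rw [← mul_sub, abs_mul, abs_of_nonneg (hw i hi)]
        exact mul_le_mul_of_nonneg_left (huv i hi) (hw i hi)
    _ = C := by rw [← Finset.sum_mul, hw_one, one_mul]

namespace MeasureTheory

variable {α : Type*} [MeasurableSpace α] {μ : Measure α}

theorem Integrable.mul_ciSup {ι : Type*} [Finite ι] [Nonempty ι] {w : α → ℝ} {Q : α → ι → ℝ}
    {B : ℝ} (hw : Integrable w μ) (hQ : ∀ i, Measurable fun x => Q x i)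
    (hB : ∀ᵐ x ∂μ, ∀ i, |Q x i| ≤ B) : Integrable (fun x => w x * ⨆ i, Q x i) μ :=
  hw.mul_bdd (Measurable.iSup hQ).aestronglyMeasurable <| hB.mono fun x hx => by
    simpa using abs_ciSup_sub_ciSup_le (g := fun _ => 0) (by simpa using hx)

theorem abs_integral_mul_sub_integral_mul_le {w f g : α → ℝ} {C : ℝ} (hw : 0 ≤ᵐ[μ] w)
    (hw_one : ∫ x, w x ∂μ = 1) (hf : Integrable (fun x => w x * f x) μ)
    (hg : Integrable (fun x => w x * g x) μ) (hfg : ∀ᵐ x ∂μ, |f x - g x| ≤ C) :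
    |(∫ x, w x * f x ∂μ) - ∫ x, w x * g x ∂μ| ≤ C := by
  have hw_int : Integrable w μ := Integrable.of_integral_ne_zero (hw_one ▸ one_ne_zero)
  rw [← integral_sub hf hg, ← Real.norm_eq_abs]
  calc ‖∫ x, (w x * f x - w x * g x) ∂μ‖ ≤ ∫ x, C * w x ∂μ := by
        refine norm_integral_le_of_norm_le (hw_int.const_mul C) ?_
        filter_upwards [hw, hfg] with x hwx hx
        rw [← mul_sub, Real.norm_eq_abs, abs_mul, abs_of_nonneg hwx, mul_comm C]
        exact mul_le_mul_of_nonneg_left hx hwx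
    _ = C := by rw [integral_const_mul, hw_one, mul_one]

end MeasureTheory

theorem composed_nn_bellman_operator_contraction_general
    (d : ℕ) (X : Set (EuclideanSpace ℝ (Fin d)))
    (hXcomp : IsCompact X)
    (A : Type*) [Fintype A] [Nonempty A]
    (γ : ℝ) (hγ : γ ∈ Set.Ioo (0:ℝ) 1)
    (r : EuclideanSpace ℝ (Fin d) → A → ℝ)
    (p : EuclideanSpace ℝ (Fin d) → EuclideanSpace ℝ (Fin d) → A → ℝ)
    (hp_nonneg : ∀ y ∈ X, ∀ x ∈ X, ∀ a : A, 0 ≤ p y x a)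
    (hp_int : ∀ x ∈ X, ∀ a : A, ∫ y in X, p y x a = 1)
    (n : ℕ)
    (c : Fin n → EuclideanSpace ℝ (Fin d)) (hc : ∀ i, c i ∈ X)
    (K : EuclideanSpace ℝ (Fin d) → Fin n → ℝ)
    (hK_nonneg : ∀ x i, 0 ≤ K x i)
    (hK_sum : ∀ x, ∑ i, K x i = 1)
    (Q₁ Q₂ : EuclideanSpace ℝ (Fin d) → A → ℝ)
    (hQ₁_meas : ∀ a, Measurable fun x => Q₁ x a)
    (hQ₂_meas : ∀ a, Measurable fun x => Q₂ x a)
    (hQ₁_bdd : ∃ B : ℝ, ∀ x ∈ X, ∀ a : A, |Q₁ x a| ≤ B)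
    (hQ₂_bdd : ∃ B : ℝ, ∀ x ∈ X, ∀ a : A, |Q₂ x a| ≤ B)
    (C : ℝ) (hC : ∀ x ∈ X, ∀ a : A, |Q₁ x a - Q₂ x a| ≤ C) :
    ∀ x ∈ X, ∀ a : A,
      |(∑ i, K x i * (r (c i) a + γ * ∫ y in X, p y (c i) a * ⨆ b : A, Q₁ y b)) -
        ∑ i, K x i * (r (c i) a + γ * ∫ y in X, p y (c i) a * ⨆ b : A, Q₂ y b)|
      ≤ γ * C := by
  intro x _ a
  have hX : ∀ᵐ y ∂volume.restrict X, y ∈ X := ae_restrict_mem hXcomp.isClosed.measurableSet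
  refine Finset.abs_sum_mul_sub_sum_mul_le _ (fun i _ => hK_nonneg x i) (hK_sum x) fun i _ => ?_
  have hp_one := hp_int (c i) (hc i) a
  have hp_integrable : Integrable (fun y => p y (c i) a) (volume.restrict X) :=
    Integrable.of_integral_ne_zero (by simp [hp_one])
  have hpQ_integrable {Q : EuclideanSpace ℝ (Fin d) → A → ℝ} (hQ : ∀ a, Measurable fun x => Q x a)
      (hQ_bdd : ∃ B : ℝ, ∀ x ∈ X, ∀ a : A, |Q x a| ≤ B) :
      Integrable (fun y => p y (c i) a * ⨆ b, Q y b) (volume.restrict X) := by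
    obtain ⟨B, hB⟩ := hQ_bdd
    exact hp_integrable.mul_ciSup hQ (hX.mono hB)
  rw [add_sub_add_left_eq_sub, ← mul_sub, abs_mul, abs_of_pos hγ.1]
  exact mul_le_mul_of_nonneg_left (abs_integral_mul_sub_integral_mul_le
    (hX.mono fun y hy => hp_nonneg y hy (c i) (hc i) a) hp_one
    (hpQ_integrable hQ₁_meas hQ₁_bdd) (hpQ_integrable hQ₂_meas hQ₂_bdd)
    (hX.mono fun y hy => abs_ciSup_sub_ciSup_le (hC y hy))) hγ.1.le

/-- The composed operator `H = Γ_NN ∘ F` is a `γ`-contraction in the sup norm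
on bounded measurable functions on `X × A`. -/
theorem composed_nn_bellman_operator_contraction
    (d : ℕ) (X : Set (EuclideanSpace ℝ (Fin d)))
    (hXne : X.Nonempty) (hXcomp : IsCompact X)
    (A : Type*) [Fintype A] [Nonempty A]
    (γ : ℝ) (hγ : γ ∈ Set.Ioo (0:ℝ) 1)
    (r : EuclideanSpace ℝ (Fin d) → A → ℝ)
    (hr_meas : ∀ a, Measurable fun x => r x a)
    (p : EuclideanSpace ℝ (Fin d) → EuclideanSpace ℝ (Fin d) → A → ℝ)
    (hp_meas : ∀ x ∈ X, ∀ a : A, Measurable fun y => p y x a)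
    (hp_nonneg : ∀ y ∈ X, ∀ x ∈ X, ∀ a : A, 0 ≤ p y x a)
    (hp_int : ∀ x ∈ X, ∀ a : A, ∫ y in X, p y x a = 1)
    (n : ℕ) (hn : 0 < n)
    (c : Fin n → EuclideanSpace ℝ (Fin d)) (hc : ∀ i, c i ∈ X)
    (K : EuclideanSpace ℝ (Fin d) → Fin n → ℝ)
    (hK_meas : ∀ i, Measurable fun x => K x i)
    (hK_nonneg : ∀ x i, 0 ≤ K x i)
    (hK_sum : ∀ x, ∑ i, K x i = 1)
    (Q₁ Q₂ : EuclideanSpace ℝ (Fin d) → A → ℝ)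
    (hQ₁_meas : ∀ a, Measurable fun x => Q₁ x a)
    (hQ₂_meas : ∀ a, Measurable fun x => Q₂ x a)
    (hQ₁_bdd : ∃ B : ℝ, ∀ x ∈ X, ∀ a : A, |Q₁ x a| ≤ B)
    (hQ₂_bdd : ∃ B : ℝ, ∀ x ∈ X, ∀ a : A, |Q₂ x a| ≤ B)
    (C : ℝ) (hC : ∀ x ∈ X, ∀ a : A, |Q₁ x a - Q₂ x a| ≤ C) :
    ∀ x ∈ X, ∀ a : A,
      |(∑ i, K x i * (r (c i) a + γ * ∫ y in X, p y (c i) a * ⨆ b : A, Q₁ y b)) -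
        ∑ i, K x i * (r (c i) a + γ * ∫ y in X, p y (c i) a * ⨆ b : A, Q₂ y b)|
      ≤ γ * C :=
  composed_nn_bellman_operator_contraction_general d X hXcomp A γ hγ r p hp_nonneg hp_int n c hc K
    hK_nonneg hK_sum Q₁ Q₂ hQ₁_meas hQ₂_meas hQ₁_bdd hQ₂_bdd C hC
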